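/- arXiv:0905.1311 — 6 statements merged into one kernel-verified Lean document; each statement's English description precedes it below -/
import Mathlib

section
/- Let 𝕂 = ℝ or ℂ and let A be an n×n lower triangular matrix over 𝕂 whose diagonal entries satisfy 0 < |A_1| < |A_2| < … < |A_n|. Then A is invertible and there exists a constant λ > 0, depending only on A, such that for all indices i, j ∈ {1, …, n} and all integers l ≥ 1: |(A^l)_{ij}| ≤ λ |A_i|^l and |(A^{−l})_{ij}| ≤ λ |A_j|^{−l}. -/
/-!
Each diagonal entry `d k = A k k` of a lower triangular matrix is an eigenvalue, and when the
`d k` are distinct every eigenvector for `d k` vanishes in the coordinates `< k` and not at `k`.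
These eigenvectors are the columns of a lower triangular invertible `P` with
`A = P D P⁻¹`, `D = diagonal d`, so `A ^ l = P D ^ l P⁻¹` and `A⁻¹ ^ l = P D⁻¹ ^ l P⁻¹`.
Since `P` and `P⁻¹` are lower triangular, `(A ^ l) i j` only involves `d k ^ l` with `k ≤ i`
and `(A⁻¹ ^ l) i j` only `d k ^ (-l)` with `j ≤ k`; monotonicity of `‖d k‖` gives the bounds,
with `λ` a bound for `∑ k, ‖P i k‖ * ‖P⁻¹ k j‖`.
-/

open Matrix

namespace Matrix

variable {ι : Type*} [Fintype ι]

section LinearOrder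

variable [LinearOrder ι]

theorem IsLowerTriangular.mulVec_apply {R : Type*} [NonUnitalNonAssocSemiring R]
    {A : Matrix ι ι R} (hA : A.IsLowerTriangular) {v : ι → R} {i : ι}
    (hv : ∀ j < i, v j = 0) : (A *ᵥ v) i = A i i * v i := by
  refine Finset.sum_eq_single i (fun j _ hji => ?_) (by simp)
  rcases hji.lt_or_gt with hj | hj
  · rw [hv j hj, mul_zero]
  · exact (congrArg (· * v j) (hA hj)).trans (zero_mul _)

section Domain

variable {R : Type*} [CommRing R] [IsDomain R] {A : Matrix ι ι R}

theorem IsLowerTriangular.exists_mulVec_eq_diag_smul (hA : A.IsLowerTriangular) (k : ι) :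
    ∃ v ≠ 0, A *ᵥ v = A k k • v := by
  have hdet : (A - diagonal fun _ => A k k).det = 0 := by
    rw [det_of_isLowerTriangular _ (hA.sub (blockTriangular_diagonal _))]
    exact Finset.prod_eq_zero (Finset.mem_univ k) (by simp)
  obtain ⟨v, hv, hAv⟩ := exists_mulVec_eq_zero_iff.mpr hdet
  rw [sub_mulVec, sub_eq_zero] at hAv
  refine ⟨v, hv, hAv.trans ?_⟩
  ext i
  simp [mulVec_diagonal]

-- At the first nonzero coordinate `i` of `v`, `A i i * v i = A k k * v i` forces `i = k`.
theorem IsLowerTriangular.eigenvector_apply_of_injective_diag (hA : A.IsLowerTriangular)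
    (hd : Function.Injective fun i => A i i) {v : ι → R} (hv : v ≠ 0) {k : ι}
    (hAv : A *ᵥ v = A k k • v) : (∀ j < k, v j = 0) ∧ v k ≠ 0 := by
  obtain ⟨i, hi, hmin⟩ := wellFounded_lt.has_min {j | v j ≠ 0} (Function.ne_iff.mp hv)
  have hbelow : ∀ j < i, v j = 0 := fun j hj => not_not.mp fun h => hmin j h hj
  have hii : A i i * v i = A k k * v i := by
    rw [← hA.mulVec_apply hbelow, hAv, Pi.smul_apply, smul_eq_mul]
  obtain rfl : i = k := hd (mul_right_cancel₀ hi hii)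
  exact ⟨hbelow, hi⟩

end Domain

section Field

variable {K : Type*} [Field K] {A : Matrix ι ι K}

theorem IsLowerTriangular.isUnit (hA : A.IsLowerTriangular) (hd : ∀ i, A i i ≠ 0) :
    IsUnit A := by
  rw [isUnit_iff_isUnit_det, det_of_isLowerTriangular A hA, isUnit_iff_ne_zero]
  exact Finset.prod_ne_zero_iff.mpr fun i _ => hd i

theorem IsLowerTriangular.exists_eq_conj_diagonal (hA : A.IsLowerTriangular)
    (hd : Function.Injective fun i => A i i) :
    ∃ P : Matrix ι ι K, P.IsLowerTriangular ∧ IsUnit P ∧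
      A = P * diagonal (fun i => A i i) * P⁻¹ := by
  choose v hv0 hAv using hA.exists_mulVec_eq_diag_smul
  have hv k := hA.eigenvector_apply_of_injective_diag hd (hv0 k) (hAv k)
  let P : Matrix ι ι K := of fun i k => v k i
  have hP : P.IsLowerTriangular := fun i k hik => (hv k).1 i hik
  have hPunit : IsUnit P := hP.isUnit fun k => (hv k).2
  refine ⟨P, hP, hPunit, ?_⟩
  have hAP : A * P = P * diagonal fun i => A i i := by
    ext i k
    rw [mul_diagonal]
    simpa [P, mul_apply, mulVec, dotProduct, mul_comm] using congrFun (hAv k) i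
  rw [← hAP, mul_nonsing_inv_cancel_right _ _ ((isUnit_iff_isUnit_det _).mp hPunit)]

end Field

end LinearOrder

variable [DecidableEq ι]

theorem conj_pow_of_isUnit {α : Type*} [CommRing α] {P : Matrix ι ι α} (hP : IsUnit P)
    (M : Matrix ι ι α) (l : ℕ) : (P * M * P⁻¹) ^ l = P * M ^ l * P⁻¹ := by
  obtain ⟨u, rfl⟩ := hP
  rw [← coe_units_inv, Units.conj_pow]

theorem inv_conj_of_isUnit {α : Type*} [CommRing α] {P : Matrix ι ι α} (hP : IsUnit P)
    (M : Matrix ι ι α) : (P * M * P⁻¹)⁻¹ = P * M⁻¹ * P⁻¹ := by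
  have := hP.invertible
  rw [Matrix.mul_inv_rev, Matrix.mul_inv_rev, inv_inv_of_invertible, Matrix.mul_assoc]

theorem norm_mul_diagonal_mul_apply_le {R : Type*} [NormedRing R] (P Q : Matrix ι ι R)
    (w : ι → R) (i j : ι) {c : ℝ} (hc : ∀ k, P i k ≠ 0 → Q k j ≠ 0 → ‖w k‖ ≤ c) :
    ‖(P * diagonal w * Q) i j‖ ≤ (∑ k, ‖P i k‖ * ‖Q k j‖) * c := by
  rw [mul_apply, Finset.sum_mul]
  refine (norm_sum_le _ _).trans (Finset.sum_le_sum fun k _ => ?_)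
  rw [mul_diagonal]
  by_cases hP : P i k = 0
  · simp [hP]
  by_cases hQ : Q k j = 0
  · simp [hQ]
  calc ‖P i k * w k * Q k j‖ ≤ ‖P i k‖ * ‖w k‖ * ‖Q k j‖ := norm_mul₃_le
    _ ≤ ‖P i k‖ * c * ‖Q k j‖ := by gcongr; exact hc k hP hQ
    _ = ‖P i k‖ * ‖Q k j‖ * c := by ring

end Matrix

/-- **Lemma 2 (Lemma `bounds`).** If `A` is an `n × n` lower triangular matrix over
`𝕂 = ℝ` or `ℂ` whose diagonal entries satisfy `0 < |A_1| < |A_2| < … < |A_n|`, then `A`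
is invertible and there is `λ > 0` (depending only on `A`) such that
`|(A^l)_{ij}| ≤ λ |A_i|^l` and `|(A^{-l})_{ij}| ≤ λ |A_j|^{-l}` for all `i, j` and `l ≥ 1`. -/
theorem stmt_4 {𝕂 : Type*} [RCLike 𝕂] {n : ℕ} (A : Matrix (Fin n) (Fin n) 𝕂)
    (hlow : ∀ i j : Fin n, i < j → A i j = 0)
    (hpos : ∀ i : Fin n, 0 < ‖A i i‖)
    (hmono : StrictMono fun i : Fin n => ‖A i i‖) :
    IsUnit A ∧
      ∃ lam : ℝ, 0 < lam ∧ ∀ (i j : Fin n) (l : ℕ), 1 ≤ l →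
        ‖(A ^ l) i j‖ ≤ lam * ‖A i i‖ ^ l ∧
        ‖(A⁻¹ ^ l) i j‖ ≤ lam * (‖A j j‖ ^ l)⁻¹ := by
  have hA : A.IsLowerTriangular := fun i j hij => hlow i j hij
  have hd0 : ∀ i, A i i ≠ 0 := fun i => norm_pos_iff.mp (hpos i)
  obtain ⟨P, hP, hPunit, hAP⟩ := hA.exists_eq_conj_diagonal hmono.injective.of_comp
  have hPinv : P⁻¹.IsLowerTriangular :=
    have := hPunit.invertible; blockTriangular_inv_of_blockTriangular hP
  have hpow (l : ℕ) : A ^ l = P * diagonal (fun i => A i i ^ l) * P⁻¹ := by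
    conv_lhs => rw [hAP]
    rw [conj_pow_of_isUnit hPunit, diagonal_pow]; rfl
  have hinv_pow (l : ℕ) : A⁻¹ ^ l = P * diagonal (fun i => (A i i)⁻¹ ^ l) * P⁻¹ := by
    have hDinv : (diagonal fun i => A i i)⁻¹ = diagonal fun i => (A i i)⁻¹ :=
      inv_eq_right_inv (by simp [hd0])
    conv_lhs => rw [hAP]
    rw [inv_conj_of_isUnit hPunit, conj_pow_of_isUnit hPunit, hDinv, diagonal_pow]; rfl
  obtain ⟨C, hC⟩ := (Set.finite_range fun ij : Fin n × Fin n =>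
    ∑ k, ‖P ij.1 k‖ * ‖P⁻¹ k ij.2‖).bddAbove
  refine ⟨hA.isUnit hd0, max C 1, by positivity, fun i j l _ => ⟨?_, ?_⟩⟩
  · rw [hpow]
    refine (norm_mul_diagonal_mul_apply_le _ _ _ i j fun k hik _ => ?_).trans
      (by gcongr; exact (hC ⟨(i, j), rfl⟩).trans (le_max_left _ _))
    rw [norm_pow]
    exact pow_le_pow_left₀ (norm_nonneg _) (hmono.monotone (not_lt.mp (mt (hP ·) hik))) l
  · rw [hinv_pow]
    refine (norm_mul_diagonal_mul_apply_le _ _ _ i j fun k _ hkj => ?_).trans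
      (by gcongr; exact (hC ⟨(i, j), rfl⟩).trans (le_max_left _ _))
    rw [norm_pow, norm_inv, inv_pow]
    exact inv_anti₀ (pow_pos (hpos j) l)
      (pow_le_pow_left₀ (norm_nonneg _) (hmono.monotone (not_lt.mp (mt (hPinv ·) hkj))) l)
end

section
/- Let 𝕂 = ℝ or ℂ and let A be an n×n lower triangular matrix over 𝕂 whose diagonal entries satisfy 0 < |A_1| < |A_2| < … < |A_n|. Suppose that all of the entries on the first column of the matrix (A_1⁻¹A − I + Δ)⁻¹ are non-zero. Then as l → ∞ the matrix powers (A_1 A⁻¹)^l converge to a limit matrix L such that L_{i1} ≠ 0 for every i ∈ {1, …, n}, while L_{ij} = 0 for every j ≥ 2. -/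
/-!
Write `a = A₁`, `B = a A⁻¹`, `M = a⁻¹A − I + Δ` and `L = M⁻¹Δ`, the matrix whose first column
`w` is that of `M⁻¹` and whose other columns vanish. Since `A` is lower triangular, the first row
of `A` is `a e₁ᵀ`; from this and `M w = e₁` one gets `w₁ = 1` and `A w = a w`. Thus `L` is an
idempotent with `B L = L B = L`, so that `B^(l+1) = (B − L)^(l+1) + L`. The matrix `B − L` is lower
triangular with diagonal `0, a/A₂, …, a/Aₙ`, all of modulus `< 1`, and the powers of such a matrix
tend to `0`: row by row, each entry obeys a contracting linear recursion driven by the rows above.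
-/

open Matrix Filter Topology

theorem tendsto_zero_of_le_mul_add {r : ℝ} (hr0 : 0 ≤ r) (hr1 : r < 1) {u e : ℕ → ℝ}
    (hu : ∀ l, 0 ≤ u l) (hrec : ∀ l, u (l + 1) ≤ r * u l + e l)
    (he : Tendsto e atTop (𝓝 0)) : Tendsto u atTop (𝓝 0) := by
  refine tendsto_order.2 ⟨fun b hb => .of_forall fun l => hb.trans_le (hu l), fun ε hε => ?_⟩
  obtain ⟨N, hN⟩ := eventually_atTop.1 <|
    he.eventually (gt_mem_nhds (show 0 < (1 - r) * (ε / 2) by nlinarith))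
  have hbound : ∀ m, u (m + N) ≤ ε / 2 + r ^ m * u N := by
    intro m
    induction m with
    | zero => simpa using (half_pos hε).le
    | succ m ih =>
      calc u (m + 1 + N) ≤ r * u (m + N) + e (m + N) := by
            rw [add_right_comm]; exact hrec _
        _ ≤ r * (ε / 2 + r ^ m * u N) + (1 - r) * (ε / 2) := by
            gcongr; exact (hN _ (Nat.le_add_left _ _)).le
        _ = ε / 2 + r ^ (m + 1) * u N := by ring
  have hgeom : ∀ᶠ m in atTop, r ^ m * u N < ε / 2 :=
    ((tendsto_pow_atTop_nhds_zero_of_lt_one hr0 hr1).mul_const (u N)).eventually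
      (gt_mem_nhds (by simpa using half_pos hε))
  rw [← map_add_atTop_eq_nat N, eventually_map]
  exact hgeom.mono fun m hm => by linarith [hbound m]

theorem add_pow_succ_of_orthogonal {R : Type*} [Semiring R] {x p : R} (hxp : x * p = 0)
    (hpx : p * x = 0) (hp : IsIdempotentElem p) (l : ℕ) :
    (x + p) ^ (l + 1) = x ^ (l + 1) + p := by
  induction l with
  | zero => simp
  | succ l ih =>
    have hxlp : x ^ (l + 1) * p = 0 := by rw [pow_succ, mul_assoc, hxp, mul_zero]
    rw [pow_succ, ih, add_mul, mul_add, mul_add, hxlp, hpx, hp.eq, ← pow_succ, add_zero, zero_add]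

theorem tendsto_pow_of_tendsto_sub_pow {R : Type*} [Ring R] [TopologicalSpace R]
    [ContinuousAdd R] {b p : R} (hbp : b * p = p) (hpb : p * b = p) (hp : IsIdempotentElem p)
    (h : Tendsto (fun l => (b - p) ^ l) atTop (𝓝 0)) : Tendsto (b ^ ·) atTop (𝓝 p) := by
  have hpow (l : ℕ) : b ^ (l + 1) = (b - p) ^ (l + 1) + p := by
    simpa using add_pow_succ_of_orthogonal (x := b - p) (by simp [sub_mul, hbp, hp.eq])
      (by simp [mul_sub, hpb, hp.eq]) hp l
  rw [← tendsto_add_atTop_iff_nat 1]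
  simpa [hpow] using ((tendsto_add_atTop_iff_nat 1).2 h).add_const p

namespace Matrix

section Projection

variable {ι K : Type*} [Fintype ι] [DecidableEq ι] [Field K] {A E M : Matrix ι ι K} {a : K}

theorem mul_smul_sub_one_add_of_mul_eq_smul (ha : a ≠ 0) (hE : IsIdempotentElem E)
    (hEA : E * A = a • E) : E * (a⁻¹ • A - 1 + E) = E := by
  simp [Matrix.mul_add, Matrix.mul_sub, hEA, hE.eq, smul_smul, ha]

theorem mul_nonsing_inv_of_mul_eq (hEM : E * M = E) (hM : IsUnit M.det) : E * M⁻¹ = E := by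
  conv_lhs => rw [← hEM]
  rw [Matrix.mul_assoc, mul_nonsing_inv _ hM, Matrix.mul_one]

theorem mul_nonsing_inv_mul_of_mul_eq (hE : IsIdempotentElem E) (hEM : E * M = E)
    (hM : IsUnit M.det) : E * (M⁻¹ * E) = E := by
  rw [← Matrix.mul_assoc, mul_nonsing_inv_of_mul_eq hEM hM, hE.eq]

theorem isIdempotentElem_nonsing_inv_mul (hE : IsIdempotentElem E) (hEM : E * M = E)
    (hM : IsUnit M.det) : IsIdempotentElem (M⁻¹ * E) := by
  rw [IsIdempotentElem, Matrix.mul_assoc, mul_nonsing_inv_mul_of_mul_eq hE hEM hM]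

theorem add_one_sub_mul_nonsing_inv_mul (hE : IsIdempotentElem E) (hEM : E * M = E)
    (hM : IsUnit M.det) : (M + 1 - E) * (M⁻¹ * E) = M⁻¹ * E := by
  rw [sub_mul, add_mul, ← Matrix.mul_assoc M, mul_nonsing_inv _ hM,
    mul_nonsing_inv_mul_of_mul_eq hE hEM hM, Matrix.one_mul, Matrix.one_mul, add_sub_cancel_left]

theorem smul_inv_mul_nonsing_inv_mul (ha : a ≠ 0) (hA : IsUnit A.det) (hE : IsIdempotentElem E)
    (hEM : E * M = E) (hM : IsUnit M.det) (hAM : a⁻¹ • A = M + 1 - E) :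
    a • A⁻¹ * (M⁻¹ * E) = M⁻¹ * E := by
  conv_lhs => rw [← add_one_sub_mul_nonsing_inv_mul hE hEM hM, ← hAM, ← Matrix.mul_assoc,
    smul_mul_smul_comm, mul_inv_cancel₀ ha, one_smul, nonsing_inv_mul _ hA, Matrix.one_mul]

theorem mul_smul_inv_of_mul_eq_smul (ha : a ≠ 0) (hA : IsUnit A.det) (hEA : E * A = a • E) :
    E * (a • A⁻¹) = E := by
  have hE : E = a⁻¹ • (E * A) := by rw [hEA, smul_smul, inv_mul_cancel₀ ha, one_smul]
  conv_lhs => rw [hE]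
  simp [smul_smul, ha, mul_nonsing_inv _ hA, Matrix.mul_assoc]

end Projection

section LowerTriangular

variable {ι R : Type*} [Fintype ι] [LinearOrder ι]

theorem IsLowerTriangular.mul_apply_self [NonUnitalNonAssocSemiring R] {P Q : Matrix ι ι R}
    (hP : P.IsLowerTriangular) (hQ : Q.IsLowerTriangular) (i : ι) :
    (P * Q) i i = P i i * Q i i := by
  rw [mul_apply]
  refine Finset.sum_eq_single i (fun k _ hki => ?_) (by simp)
  rcases hki.lt_or_gt with hki | hik
  · rw [hQ hki, mul_zero]
  · rw [hP hik, zero_mul]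

theorem IsLowerTriangular.isUnit_det [Field R] {A : Matrix ι ι R} (hA : A.IsLowerTriangular)
    (hdiag : ∀ i, A i i ≠ 0) : IsUnit A.det := by
  rw [det_of_isLowerTriangular A hA]
  exact (Finset.prod_ne_zero_iff.2 fun i _ => hdiag i).isUnit

theorem IsLowerTriangular.inv [Field R] {A : Matrix ι ι R} (hA : A.IsLowerTriangular)
    (hdet : IsUnit A.det) : A⁻¹.IsLowerTriangular :=
  have := A.invertibleOfIsUnitDet hdet
  blockTriangular_inv_of_blockTriangular hA

theorem IsLowerTriangular.inv_apply_self [Field R] {A : Matrix ι ι R}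
    (hA : A.IsLowerTriangular) (hdet : IsUnit A.det) (i : ι) : A⁻¹ i i = (A i i)⁻¹ := by
  have h := congr_fun₂ (nonsing_inv_mul A hdet) i i
  rw [(hA.inv hdet).mul_apply_self hA, one_apply_eq] at h
  exact eq_inv_of_mul_eq_one_left h

theorem IsLowerTriangular.norm_smul_inv_apply_self_lt_one [NormedField R] {A : Matrix ι ι R}
    (hA : A.IsLowerTriangular) (hdet : IsUnit A.det) {i j : ι} (h : ‖A j j‖ < ‖A i i‖) :
    ‖(A j j • A⁻¹) i i‖ < 1 := by
  rw [smul_apply, hA.inv_apply_self hdet, smul_eq_mul, norm_mul, norm_inv,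
    mul_inv_lt_iff₀ ((norm_nonneg _).trans_lt h), one_mul]
  exact h

theorem IsLowerTriangular.single_mul_of_isBot [Semiring R] {A : Matrix ι ι R}
    (hA : A.IsLowerTriangular) {z : ι} (hz : IsBot z) :
    single z z 1 * A = A z z • single z z 1 := by
  ext i j
  rcases eq_or_ne i z with rfl | hi
  · rcases eq_or_ne j i with rfl | hj
    · simp
    · simp [hj.symm, hA ((hz j).lt_of_ne' hj)]
  · simp [hi, hi.symm]

theorem mul_single_isLowerTriangular_of_isBot [Semiring R] (N : Matrix ι ι R) {z : ι}
    (hz : IsBot z) (c : R) : (N * single z z c).IsLowerTriangular := fun i _ hij =>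
  mul_single_apply_of_ne c z z i _ ((hz i).trans_lt hij).ne' N

theorem IsLowerTriangular.tendsto_pow_nhds_zero [NormedRing R] {C : Matrix ι ι R}
    (hC : C.IsLowerTriangular) (hdiag : ∀ i, ‖C i i‖ < 1) :
    Tendsto (C ^ ·) atTop (𝓝 0) := by
  refine tendsto_pi_nhds.2 fun i => ?_
  induction i using WellFoundedLT.induction with
  | _ i ih =>
  refine tendsto_pi_nhds.2 fun j => ?_
  set e := fun l => ∑ k ∈ Finset.univ.erase i, C i k * (C ^ l) k j
  have he : Tendsto e atTop (𝓝 0) := by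
    rw [← Finset.sum_const_zero (s := Finset.univ.erase i)]
    refine tendsto_finsetSum _ fun k hk => ?_
    rcases (Finset.ne_of_mem_erase hk).lt_or_gt with hki | hik
    · simpa using (tendsto_pi_nhds.1 (ih k hki) j).const_mul (C i k)
    · simp [hC hik]
  have hrec (l : ℕ) : (C ^ (l + 1)) i j = C i i * (C ^ l) i j + e l := by
    rw [pow_succ', mul_apply, ← Finset.add_sum_erase _ _ (Finset.mem_univ i)]
  refine tendsto_zero_iff_norm_tendsto_zero.2 <|
    tendsto_zero_of_le_mul_add (norm_nonneg _) (hdiag i) (fun _ => norm_nonneg _)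
      (fun l => ?_) (tendsto_zero_iff_norm_tendsto_zero.1 he)
  rw [hrec]
  exact (norm_add_le _ _).trans (by gcongr; exact norm_mul_le _ _)

theorem IsLowerTriangular.tendsto_smul_inv_pow [NormedField R] {A : Matrix ι ι R}
    (hA : A.IsLowerTriangular) {z : ι} (hz : IsBot z) (hz0 : A z z ≠ 0)
    (hmono : StrictMono fun i => ‖A i i‖)
    (hM : IsUnit ((A z z)⁻¹ • A - 1 + single z z 1).det) :
    Tendsto (fun l => (A z z • A⁻¹) ^ l) atTop
      (𝓝 (((A z z)⁻¹ • A - 1 + single z z 1)⁻¹ * single z z 1)) := by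
  set a := A z z
  set E : Matrix ι ι R := single z z 1
  set M := a⁻¹ • A - 1 + E
  have hlt {i : ι} (hi : i ≠ z) : ‖a‖ < ‖A i i‖ := hmono ((hz i).lt_of_ne' hi)
  have hAdet : IsUnit A.det := hA.isUnit_det fun i => by
    rcases eq_or_ne i z with rfl | hi
    exacts [hz0, norm_pos_iff.1 ((norm_nonneg a).trans_lt (hlt hi))]
  have hE : IsIdempotentElem E := by simp [E, IsIdempotentElem]
  have hEA : E * A = a • E := hA.single_mul_of_isBot hz
  have hEM : E * M = E := mul_smul_sub_one_add_of_mul_eq_smul hz0 hE hEA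
  have hB : (a • A⁻¹).IsLowerTriangular := fun i j h => by simp [hA.inv hAdet h]
  have hdiag (i : ι) : ‖(a • A⁻¹ - M⁻¹ * E) i i‖ < 1 := by
    rcases eq_or_ne i z with rfl | hi
    · have hLzz : (M⁻¹ * E) i i = 1 := by
        simpa [E] using congr_fun₂ (mul_nonsing_inv_mul_of_mul_eq hE hEM hM) i i
      simp [hLzz, hA.inv_apply_self hAdet, a, hz0]
    · rw [sub_apply, mul_single_apply_of_ne _ _ _ _ _ hi, sub_zero]
      exact hA.norm_smul_inv_apply_self_lt_one hAdet (hlt hi)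
  exact tendsto_pow_of_tendsto_sub_pow
    (smul_inv_mul_nonsing_inv_mul hz0 hAdet hE hEM hM (by simp only [M]; abel))
    (by rw [Matrix.mul_assoc, mul_smul_inv_of_mul_eq_smul hz0 hAdet hEA])
    (isIdempotentElem_nonsing_inv_mul hE hEM hM)
    (IsLowerTriangular.tendsto_pow_nhds_zero
      (hB.sub (mul_single_isLowerTriangular_of_isBot _ hz 1)) hdiag)

end LowerTriangular

end Matrix

/-- **Lemma 3 (Lemma `three`).** Let `A` be an `n × n` lower triangular matrix over
`𝕂 = ℝ` or `ℂ` with `0 < |A_1| < … < |A_n|`, and suppose all entries of the first column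
of `(A_1⁻¹ A - I + Δ)⁻¹` are non-zero, where `Δ` has a `1` in position `(1,1)` and zeros
elsewhere. Then `(A_1 A⁻¹)^l` converges as `l → ∞` to a matrix `L` whose first-column
entries are all non-zero and whose remaining entries are all zero. -/
theorem stmt_5 {𝕂 : Type*} [RCLike 𝕂] {n : ℕ} (hn : 0 < n)
    (A : Matrix (Fin n) (Fin n) 𝕂)
    (hlow : ∀ i j : Fin n, i < j → A i j = 0)
    (hpos : ∀ i : Fin n, 0 < ‖A i i‖)
    (hmono : StrictMono fun i : Fin n => ‖A i i‖)
    (hcol : ∀ i : Fin n,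
      (((A ⟨0, hn⟩ ⟨0, hn⟩)⁻¹ • A - 1 +
        Matrix.single (⟨0, hn⟩ : Fin n) (⟨0, hn⟩ : Fin n) (1 : 𝕂))⁻¹) i ⟨0, hn⟩ ≠ 0) :
    ∃ L : Matrix (Fin n) (Fin n) 𝕂,
      Tendsto (fun l : ℕ => (A ⟨0, hn⟩ ⟨0, hn⟩ • A⁻¹) ^ l) atTop (nhds L) ∧
      (∀ i : Fin n, L i ⟨0, hn⟩ ≠ 0) ∧
      (∀ i j : Fin n, j ≠ ⟨0, hn⟩ → L i j = 0) := by
  set z : Fin n := ⟨0, hn⟩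
  have hM : IsUnit ((A z z)⁻¹ • A - 1 + single z z 1).det := by
    by_contra h
    exact hcol z (by rw [nonsing_inv_apply_not_isUnit _ h, Matrix.zero_apply])
  refine ⟨_, IsLowerTriangular.tendsto_smul_inv_pow hlow (fun i => Nat.zero_le i)
      (norm_pos_iff.1 (hpos _)) hmono hM, fun i => by simpa using hcol i,
    fun i j hj => mul_single_apply_of_ne _ _ _ _ _ hj _⟩
end

section
/- Let 𝕂 = ℝ or ℂ, let A be an n×n lower triangular matrix and B an n×n diagonal matrix over 𝕂 with 0 < |B_n| < … < |B_2| < |B_1| < 1 < |A_1| < |A_2| < … < |A_n|, such that (B_1, A_1) is a generating pair and ln|B_j|/ln|A_j| < ln|B_1|/ln|A_1| for every j ≥ 2. Then for every p ∈ 𝕂ⁿ with p_1 ≠ 0 and every x_1 ∈ 𝕂, there exists a sequence (k_i, l_i) of pairs of natural numbers with k_i → ∞ and l_i → ∞ such that B^{k_i} A^{l_i} p → (x_1, 0, …, 0)ᵀ as i → ∞. In particular, 𝕂 × {0}^{n−1} is contained in the closure of the set {B^k A^l p : k, l ∈ ℕ}. -/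
open Matrix Filter Topology

/-- A pair `(a, b) ∈ 𝕂²` is *generating* if `|a| < |b|` and `{a^m b^n : m, n ∈ ℕ}`
is dense in `𝕂`. -/
def GenPair {𝕂 : Type*} [RCLike 𝕂] (a b : 𝕂) : Prop :=
  ‖a‖ < ‖b‖ ∧ Dense {x : 𝕂 | ∃ m n : ℕ, x = a ^ m * b ^ n}

/-!
Since `B` is diagonal, coordinate `j` of `B^k A^l p` is `B_j^k (A^l p)_j`, and since `A` is lower
triangular its first coordinate is `B_1^k A_1^l p_1`. Density of `{B_1^k A_1^l}` near
`x_1 / (p_1 A_1^i)` yields `(k_i, l_i)` with `l_i ≥ i` and `B_1^{k_i} A_1^{l_i} → x_1 / p_1`; as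
`|B_1|^{k_i} |A_1|^{l_i}` stays bounded, `k_i → ∞` too. For `j ≥ 2`, row `j` of `A^l` grows like
`l^j |A_j|^l`, while with `θ = ln|B_j| / ln|B_1|`
`|B_j|^k |A_j|^l = (|B_1|^k |A_1|^l)^θ ρ^l`, `ρ = |A_j| / |A_1|^θ`,
and the log-ratio hypothesis says precisely `ρ < 1`; so these coordinates tend to `0`.
-/

section Real

open Real

theorem tendsto_add_one_pow_mul_pow_of_lt_one (e : ℕ) {ρ : ℝ} (hρ0 : 0 < ρ) (hρ1 : ρ < 1) :
    Tendsto (fun m : ℕ => ((m : ℝ) + 1) ^ e * ρ ^ m) atTop (𝓝 0) := by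
  have h := ((tendsto_add_atTop_iff_nat 1).2
    (tendsto_pow_const_mul_const_pow_of_lt_one e hρ0.le hρ1)).const_mul ρ⁻¹
  rw [mul_zero] at h
  refine h.congr fun m => ?_
  rw [pow_succ, Nat.cast_succ]
  field_simp

theorem tendsto_atTop_of_tendsto_pow_mul_pow {β α s : ℝ} (hβ0 : 0 < β) (hβ1 : β < 1)
    (hα : 1 < α) {k l : ℕ → ℕ} (hl : Tendsto l atTop atTop)
    (h : Tendsto (fun i => β ^ k i * α ^ l i) atTop (𝓝 s)) : Tendsto k atTop atTop := by
  have hβk : Tendsto (fun i => β ^ k i) atTop (𝓝 0) := by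
    have hαl := tendsto_inv_atTop_zero.comp ((tendsto_pow_atTop_atTop_of_one_lt hα).comp hl)
    simpa [mul_assoc, (pow_pos (zero_lt_one.trans hα) _).ne'] using h.mul hαl
  refine tendsto_atTop.2 fun N => ?_
  filter_upwards [hβk.eventually (gt_mem_nhds (pow_pos hβ0 N))] with i hi
  exact ((pow_lt_pow_iff_right_of_lt_one₀ hβ0 hβ1).1 hi).le

theorem mul_mul_pow_add_mul_mul_pow_le {a c K : ℝ} (ha : 1 ≤ a) (hc : 0 ≤ c) (hK : 0 ≤ K)
    (s l : ℕ) :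
    a * (c ^ (s + 1) * a ^ l) + K * (c ^ s * a ^ l) ≤ (c + K) ^ (s + 1) * a ^ (l + 1) := by
  have hpow : c ^ (s + 1) + K * c ^ s ≤ (c + K) ^ (s + 1) := by
    rw [pow_succ, pow_succ, mul_comm K, ← mul_add]
    exact mul_le_mul_of_nonneg_right (pow_le_pow_left₀ hc (by linarith) s) (by positivity)
  have hal := mul_le_mul_of_nonneg_left (pow_le_pow_right₀ ha l.le_succ)
    (by positivity : 0 ≤ K * c ^ s)
  calc a * (c ^ (s + 1) * a ^ l) + K * (c ^ s * a ^ l)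
      ≤ (c ^ (s + 1) + K * c ^ s) * a ^ (l + 1) := by
        rw [pow_succ' a] at hal ⊢
        linarith
    _ ≤ (c + K) ^ (s + 1) * a ^ (l + 1) :=
        mul_le_mul_of_nonneg_right hpow (by positivity)

theorem rpow_pow_mul_pow_eq {β α α' θ : ℝ} (hβ : 0 ≤ β) (hα : 0 < α) (k l : ℕ) :
    (β ^ θ) ^ k * α' ^ l = (β ^ k * α ^ l) ^ θ * (α' / α ^ θ) ^ l := by
  rw [mul_rpow (pow_nonneg hβ k) (pow_nonneg hα.le l), ← rpow_pow_comm hβ,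
    ← rpow_pow_comm hα.le, mul_assoc, ← mul_pow, mul_div_cancel₀ _ (rpow_pos_of_pos hα θ).ne']

theorem tendsto_add_one_pow_mul_pow_mul_pow_nhds_zero {β α β' α' s : ℝ} (hβ0 : 0 < β)
    (hβ1 : β < 1) (hα : 1 < α) (hβ'0 : 0 < β') (hα' : 1 < α')
    (hlog : log β' / log α' < log β / log α) {k l : ℕ → ℕ} (hl : Tendsto l atTop atTop)
    (h : Tendsto (fun i => β ^ k i * α ^ l i) atTop (𝓝 s)) (e : ℕ) :
    Tendsto (fun i => ((l i : ℝ) + 1) ^ e * (β' ^ k i * α' ^ l i)) atTop (𝓝 0) := by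
  have hlogβ : log β < 0 := log_neg hβ0 hβ1
  have hlogα : 0 < log α := log_pos hα
  have hlogα' : 0 < log α' := log_pos hα'
  have hlogβ' : log β' < 0 := by
    have := hlog.trans (div_neg_of_neg_of_pos hlogβ hlogα)
    rwa [div_lt_iff₀ hlogα', zero_mul] at this
  set θ := log β' / log β
  have hθ : 0 ≤ θ := (div_pos_of_neg_of_neg hlogβ' hlogβ).le
  have hβ' : β' = β ^ θ := by
    rw [rpow_def_of_pos hβ0, mul_div_cancel₀ _ hlogβ.ne, exp_log hβ'0]
  have hαθ : 0 < α ^ θ := rpow_pos_of_pos (by linarith) θ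
  set ρ := α' / α ^ θ
  have hρ0 : 0 < ρ := div_pos (by linarith) hαθ
  have hρ1 : ρ < 1 := by
    rw [div_lt_one hαθ, ← log_lt_log_iff (by linarith) hαθ, log_rpow (by linarith),
      div_mul_eq_mul_div, lt_div_iff_of_neg hlogβ]
    rw [div_lt_div_iff₀ hlogα' hlogα] at hlog
    linarith
  have hlim := (h.rpow_const (Or.inr hθ)).mul
    ((tendsto_add_one_pow_mul_pow_of_lt_one e hρ0 hρ1).comp hl)
  rw [mul_zero] at hlim
  refine hlim.congr fun i => ?_
  simp only [Function.comp, hβ', rpow_pow_mul_pow_eq hβ0.le (zero_lt_one.trans hα)]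
  ring

end Real

theorem GenPair.exists_tendsto {𝕂 : Type*} [RCLike 𝕂] {b a : 𝕂} (h : GenPair b a) (t : 𝕂) :
    ∃ k l : ℕ → ℕ, Tendsto l atTop atTop ∧
      Tendsto (fun i => b ^ k i * a ^ l i) atTop (𝓝 t) := by
  have ha : a ≠ 0 := norm_pos_iff.1 ((norm_nonneg b).trans_lt h.1)
  have happrox : ∀ i : ℕ, ∃ k l : ℕ, i ≤ l ∧ dist (b ^ k * a ^ l) t < 1 / (i + 1) := by
    intro i
    have hai : 0 < ‖a ^ i‖ := norm_pos_iff.2 (pow_ne_zero i ha)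
    obtain ⟨_, ⟨k, l, rfl⟩, hd⟩ :=
      Metric.mem_closure_iff.1 (h.2 (t / a ^ i)) _ (div_pos Nat.one_div_pos_of_nat hai)
    refine ⟨k, l + i, Nat.le_add_left i l, ?_⟩
    rw [dist_comm, lt_div_iff₀ hai, dist_eq_norm, ← norm_mul, sub_mul,
      div_mul_cancel₀ _ (pow_ne_zero i ha)] at hd
    rwa [pow_add, ← mul_assoc, dist_eq_norm]
  choose k l hl hkl using happrox
  exact ⟨k, l, tendsto_atTop_mono hl tendsto_id,
    tendsto_iff_dist_tendsto_zero.2 (squeeze_zero (fun _ => dist_nonneg) (fun i => (hkl i).le)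
      tendsto_one_div_add_atTop_nhds_zero_nat)⟩

namespace Matrix

section Triangular

variable {ι R : Type*} [Fintype ι] [LinearOrder ι] [Semiring R] {A : Matrix ι ι R}

theorem IsLowerTriangular.pow_apply_self [DecidableEq ι] (hA : A.IsLowerTriangular) (l : ℕ)
    (i : ι) : (A ^ l) i i = A i i ^ l := by
  induction l with
  | zero => simp
  | succ l ih =>
    rw [pow_succ, mul_apply, Finset.sum_eq_single i, ih, pow_succ]
    · intro m _ hmi
      rcases lt_or_gt_of_ne hmi with hm | hm
      · rw [hA hm, mul_zero]
      · rw [hA.pow l hm, zero_mul]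
    · simp

theorem IsLowerTriangular.pow_mulVec_apply_of_isBot [DecidableEq ι] (hA : A.IsLowerTriangular)
    (l : ℕ) (p : ι → R) {i : ι} (hi : IsBot i) : (A ^ l *ᵥ p) i = A i i ^ l * p i := by
  rw [← hA.pow_apply_self]
  refine Finset.sum_eq_single i (fun m _ hmi => ?_) (by simp)
  simp only [hA.pow l (OrderDual.toDual_lt_toDual.2 ((hi m).lt_of_ne' hmi)), zero_mul]

end Triangular

theorem IsDiag.pow_mul_mulVec_apply {ι R : Type*} [Fintype ι] [DecidableEq ι] [Semiring R]
    {B : Matrix ι ι R} (hB : B.IsDiag) (M : Matrix ι ι R) (p : ι → R) (k : ℕ) (j : ι) :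
    ((B ^ k * M) *ᵥ p) j = B j j ^ k * (M *ᵥ p) j := by
  conv_lhs => rw [← hB.diagonal_diag, diagonal_pow, ← mulVec_mulVec, mulVec_diagonal]
  rfl

section Norm

variable {R : Type*} [NormedRing R]

theorem norm_mulVec_apply_le {m n : Type*} [Fintype n] (M : Matrix m n R) (p : n → R) (i : m)
    {C : ℝ} (hC : ∀ j, ‖M i j‖ ≤ C) : ‖(M *ᵥ p) i‖ ≤ C * ∑ j, ‖p j‖ := by
  rw [Finset.mul_sum]
  refine (norm_sum_le _ _).trans (Finset.sum_le_sum fun j _ => ?_)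
  exact (norm_mul_le _ _).trans (mul_le_mul_of_nonneg_right (hC j) (norm_nonneg _))

variable {n : ℕ} {A : Matrix (Fin n) (Fin n) R}

theorem IsLowerTriangular.norm_pow_succ_apply_le (hA : A.IsLowerTriangular)
    (hdiag : ∀ i, 1 ≤ ‖A i i‖) (hmono : Monotone fun i => ‖A i i‖)
    {K : ℝ} (hK : ∀ i, ∑ j, ‖A i j‖ ≤ K) {c : ℝ} (hc : 1 ≤ c) {l : ℕ}
    (ih : ∀ i j, ‖(A ^ l) i j‖ ≤ c ^ (i : ℕ) * ‖A i i‖ ^ l) (i j : Fin n) :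
    ‖(A ^ (l + 1)) i j‖ ≤ (c + K) ^ (i : ℕ) * ‖A i i‖ ^ (l + 1) := by
  set a : ℝ := ‖A i i‖
  have hdiag_term : ‖A i i * (A ^ l) i j‖ ≤ a * (c ^ (i : ℕ) * a ^ l) :=
    (norm_mul_le _ _).trans (mul_le_mul_of_nonneg_left (ih i j) (norm_nonneg _))
  rw [pow_succ', mul_apply, ← Finset.add_sum_erase _ _ (Finset.mem_univ i)]
  refine (norm_add_le _ _).trans ?_
  obtain h0 | ⟨s, hs⟩ : (i : ℕ) = 0 ∨ ∃ s, (i : ℕ) = s + 1 :=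
    (Nat.eq_zero_or_eq_succ_pred _).imp_right fun h => ⟨_, h⟩
  · have hoff : ∑ m ∈ Finset.univ.erase i, A i m * (A ^ l) m j = 0 := by
      refine Finset.sum_eq_zero fun m hm => ?_
      have him : i < m := Fin.lt_def.2 (by have := Finset.ne_of_mem_erase hm; grind)
      rw [hA him, zero_mul]
    rw [hoff, norm_zero, add_zero, h0]
    simpa [h0, pow_succ'] using hdiag_term
  · have hterm : ∀ m ∈ Finset.univ.erase i,
        ‖A i m * (A ^ l) m j‖ ≤ ‖A i m‖ * (c ^ s * a ^ l) := by
      intro m hm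
      rcases lt_or_gt_of_ne (Finset.ne_of_mem_erase hm) with hmi | hmi
      · refine (norm_mul_le _ _).trans (mul_le_mul_of_nonneg_left ?_ (norm_nonneg _))
        refine (ih m j).trans (mul_le_mul (pow_le_pow_right₀ hc ?_)
          (pow_le_pow_left₀ (norm_nonneg _) (hmono hmi.le) l) (by positivity) (by positivity))
        have := Fin.lt_def.1 hmi
        omega
      · rw [hA hmi, zero_mul, norm_zero]
        positivity
    have hoff : ‖∑ m ∈ Finset.univ.erase i, A i m * (A ^ l) m j‖ ≤ K * (c ^ s * a ^ l) :=
      calc ‖∑ m ∈ Finset.univ.erase i, A i m * (A ^ l) m j‖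
          ≤ ∑ m ∈ Finset.univ.erase i, ‖A i m‖ * (c ^ s * a ^ l) :=
            (norm_sum_le _ _).trans (Finset.sum_le_sum hterm)
        _ ≤ ∑ m, ‖A i m‖ * (c ^ s * a ^ l) :=
            Finset.sum_le_sum_of_subset_of_nonneg (Finset.erase_subset _ _)
              fun _ _ _ => by positivity
        _ ≤ K * (c ^ s * a ^ l) := by
            rw [← Finset.sum_mul]
            exact mul_le_mul_of_nonneg_right (hK i) (by positivity)
    have hK0 : 0 ≤ K := (Finset.sum_nonneg fun _ _ => norm_nonneg _).trans (hK i)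
    rw [hs] at hdiag_term ⊢
    exact (add_le_add hdiag_term hoff).trans
      (mul_mul_pow_add_mul_mul_pow_le (hdiag i) (by linarith) hK0 s l)

theorem IsLowerTriangular.norm_pow_apply_le [NormOneClass R] (hA : A.IsLowerTriangular)
    (hdiag : ∀ i, 1 ≤ ‖A i i‖) (hmono : Monotone fun i => ‖A i i‖)
    {K : ℝ} (hK1 : 1 ≤ K) (hK : ∀ i, ∑ j, ‖A i j‖ ≤ K) (l : ℕ) (i j : Fin n) :
    ‖(A ^ l) i j‖ ≤ (K * (l + 1)) ^ (i : ℕ) * ‖A i i‖ ^ l := by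
  induction l generalizing i j with
  | zero =>
    calc ‖(A ^ 0) i j‖ ≤ 1 := by rw [pow_zero, one_apply]; split_ifs <;> simp
      _ ≤ _ := by simpa using one_le_pow₀ hK1
  | succ l ih =>
    have hc : 1 ≤ K * (l + 1) :=
      one_le_mul_of_one_le_of_one_le hK1 (le_add_of_nonneg_left l.cast_nonneg)
    have hnext : K * ((l + 1 : ℕ) + 1 : ℝ) = K * (l + 1) + K := by push_cast; ring
    rw [hnext]
    exact hA.norm_pow_succ_apply_le hdiag hmono hK hc ih i j

theorem IsLowerTriangular.tendsto_mul_pow_mulVec_apply_nhds_zero [NormOneClass R]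
    (hA : A.IsLowerTriangular) (hdiag : ∀ i, 1 ≤ ‖A i i‖) (hmono : Monotone fun i => ‖A i i‖)
    (p : Fin n → R) (b : R) {k l : ℕ → ℕ} (j : Fin n)
    (h : Tendsto (fun i => ((l i : ℝ) + 1) ^ (j : ℕ) * (‖b‖ ^ k i * ‖A j j‖ ^ l i)) atTop (𝓝 0)) :
    Tendsto (fun i => b ^ k i * (A ^ l i *ᵥ p) j) atTop (𝓝 0) := by
  set K : ℝ := 1 + ∑ i, ∑ j, ‖A i j‖
  have hK1 : 1 ≤ K := le_add_of_nonneg_right (by positivity)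
  have hK : ∀ i, ∑ j, ‖A i j‖ ≤ K := fun i => le_add_of_nonneg_of_le zero_le_one
    (Finset.single_le_sum (f := fun i => ∑ j, ‖A i j‖) (fun _ _ => by positivity)
      (Finset.mem_univ i))
  have hlim := h.const_mul (K ^ (j : ℕ) * ∑ m, ‖p m‖)
  rw [mul_zero] at hlim
  refine squeeze_zero_norm (fun i => ?_) hlim
  have hrow := norm_mulVec_apply_le _ p j (hA.norm_pow_apply_le hdiag hmono hK1 hK (l i) j)
  calc ‖b ^ k i * (A ^ l i *ᵥ p) j‖
      ≤ ‖b‖ ^ k i * ((K * (l i + 1)) ^ (j : ℕ) * ‖A j j‖ ^ l i * ∑ m, ‖p m‖) :=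
        (norm_mul_le _ _).trans
          (mul_le_mul (norm_pow_le _ _) hrow (norm_nonneg _) (by positivity))
    _ = _ := by rw [mul_pow]; ring

end Norm

end Matrix

theorem stmt_6_general {𝕂 : Type*} [RCLike 𝕂] {n : ℕ} (hn : 0 < n)
    (A B : Matrix (Fin n) (Fin n) 𝕂)
    (hAlow : ∀ i j : Fin n, i < j → A i j = 0)
    (hBdiag : ∀ i j : Fin n, i ≠ j → B i j = 0)
    (hBpos : ∀ i : Fin n, 0 < ‖B i i‖)
    (hB1 : ‖B ⟨0, hn⟩ ⟨0, hn⟩‖ < 1)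
    (hA1 : 1 < ‖A ⟨0, hn⟩ ⟨0, hn⟩‖)
    (hAmono : StrictMono fun i : Fin n => ‖A i i‖)
    (hgen1 : GenPair (B ⟨0, hn⟩ ⟨0, hn⟩) (A ⟨0, hn⟩ ⟨0, hn⟩))
    (hlog : ∀ j : Fin n, (⟨0, hn⟩ : Fin n) < j →
      Real.log ‖B j j‖ / Real.log ‖A j j‖ <
        Real.log ‖B ⟨0, hn⟩ ⟨0, hn⟩‖ / Real.log ‖A ⟨0, hn⟩ ⟨0, hn⟩‖) :
    ∀ p : Fin n → 𝕂, p ⟨0, hn⟩ ≠ 0 →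
      (∀ x₁ : 𝕂, ∃ k l : ℕ → ℕ,
        Tendsto k atTop atTop ∧ Tendsto l atTop atTop ∧
        Tendsto (fun i => (B ^ k i * A ^ l i).mulVec p) atTop
          (nhds fun j : Fin n => if j = ⟨0, hn⟩ then x₁ else 0)) ∧
      {x : Fin n → 𝕂 | ∀ j : Fin n, j ≠ ⟨0, hn⟩ → x j = 0} ⊆
        closure {y : Fin n → 𝕂 | ∃ k l : ℕ, y = (B ^ k * A ^ l).mulVec p} := by
  intro p hp
  set i0 : Fin n := ⟨0, hn⟩
  have hi0 : IsBot i0 := fun j => Nat.zero_le j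
  have hA : A.IsLowerTriangular := fun i j h => hAlow i j h
  have hB : B.IsDiag := fun i j h => hBdiag i j h
  have hAdiag : ∀ i, 1 ≤ ‖A i i‖ := fun i => hA1.le.trans (hAmono.monotone (hi0 i))
  have hlim : ∀ x₁ : 𝕂, ∃ k l : ℕ → ℕ, Tendsto k atTop atTop ∧ Tendsto l atTop atTop ∧
      Tendsto (fun i => (B ^ k i * A ^ l i) *ᵥ p) atTop (𝓝 fun j => if j = i0 then x₁ else 0) := by
    intro x₁
    obtain ⟨k, l, hl, hkl⟩ := hgen1.exists_tendsto (x₁ / p i0)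
    have hnorm := hkl.norm
    simp only [norm_mul, norm_pow] at hnorm
    refine ⟨k, l, tendsto_atTop_of_tendsto_pow_mul_pow (hBpos i0) hB1 hA1 hl hnorm, hl,
      tendsto_pi_nhds.2 fun j => ?_⟩
    simp only [hB.pow_mul_mulVec_apply]
    rcases (hi0 j).eq_or_lt with rfl | hj
    · simp only [hA.pow_mulVec_apply_of_isBot _ p hi0, if_pos]
      simpa [div_mul_cancel₀ _ hp, mul_assoc] using hkl.mul_const (p i0)
    · rw [if_neg hj.ne']
      exact hA.tendsto_mul_pow_mulVec_apply_nhds_zero hAdiag hAmono.monotone p _ j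
        (tendsto_add_one_pow_mul_pow_mul_pow_nhds_zero (hBpos i0) hB1 hA1 (hBpos j)
          (hA1.trans (hAmono hj)) (hlog j hj) hl hnorm j)
  refine ⟨hlim, fun x hx => ?_⟩
  obtain ⟨k, l, -, -, hconv⟩ := hlim (x i0)
  have hx_eq : (fun j => if j = i0 then x i0 else 0) = x :=
    funext fun j => by by_cases h : j = i0 <;> simp [h, hx j]
  exact hx_eq ▸ mem_closure_of_tendsto hconv (Eventually.of_forall fun i => ⟨k i, l i, rfl⟩)

/-- **Base case of the main theorem.** Let `A` be lower triangular and `B` diagonal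
`n × n` matrices over `𝕂 = ℝ` or `ℂ` with
`0 < |B_n| < … < |B_1| < 1 < |A_1| < … < |A_n|`, `(B_1, A_1)` generating and
`ln|B_j|/ln|A_j| < ln|B_1|/ln|A_1|` for `j ≥ 2`. Then for every `p` with `p_1 ≠ 0` and
every `x_1 ∈ 𝕂` there is a sequence `(k_i, l_i) → (∞, ∞)` with
`B^{k_i} A^{l_i} p → (x_1, 0, …, 0)ᵀ`; in particular `𝕂 × {0}^{n-1}` is contained in
the closure of `{B^k A^l p : k, l ∈ ℕ}`. -/
theorem stmt_6 {𝕂 : Type*} [RCLike 𝕂] {n : ℕ} (hn : 0 < n)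
    (A B : Matrix (Fin n) (Fin n) 𝕂)
    (hAlow : ∀ i j : Fin n, i < j → A i j = 0)
    (hBdiag : ∀ i j : Fin n, i ≠ j → B i j = 0)
    (hBpos : ∀ i : Fin n, 0 < ‖B i i‖)
    (hBanti : StrictAnti fun i : Fin n => ‖B i i‖)
    (hB1 : ‖B ⟨0, hn⟩ ⟨0, hn⟩‖ < 1)
    (hA1 : 1 < ‖A ⟨0, hn⟩ ⟨0, hn⟩‖)
    (hAmono : StrictMono fun i : Fin n => ‖A i i‖)
    (hgen1 : GenPair (B ⟨0, hn⟩ ⟨0, hn⟩) (A ⟨0, hn⟩ ⟨0, hn⟩))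
    (hlog : ∀ j : Fin n, (⟨0, hn⟩ : Fin n) < j →
      Real.log ‖B j j‖ / Real.log ‖A j j‖ <
        Real.log ‖B ⟨0, hn⟩ ⟨0, hn⟩‖ / Real.log ‖A ⟨0, hn⟩ ⟨0, hn⟩‖) :
    ∀ p : Fin n → 𝕂, p ⟨0, hn⟩ ≠ 0 →
      (∀ x₁ : 𝕂, ∃ k l : ℕ → ℕ,
        Tendsto k atTop atTop ∧ Tendsto l atTop atTop ∧
        Tendsto (fun i => (B ^ k i * A ^ l i).mulVec p) atTop
          (nhds fun j : Fin n => if j = ⟨0, hn⟩ then x₁ else 0)) ∧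
      {x : Fin n → 𝕂 | ∀ j : Fin n, j ≠ ⟨0, hn⟩ → x j = 0} ⊆
        closure {y : Fin n → 𝕂 | ∃ k l : ℕ, y = (B ^ k * A ^ l).mulVec p} :=
  stmt_6_general hn A B hAlow hBdiag hBpos hB1 hA1 hAmono hgen1 hlog
end

section
/- The pair (−1/2, 3) is a generating pair in ℝ; that is, |−1/2| < |3| and the set {(−1/2)^m · 3^n : m, n ∈ ℕ} is dense in ℝ. -/
open Real

/-- No nontrivial relation `p * log 3 = q * log 4` with `p ≠ 0`. -/
lemma gen_key (p q : ℕ) (hp : p ≠ 0) (h : (p : ℝ) * Real.log 3 = q * Real.log 4) : False := by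
  have h3 : (0:ℝ) < Real.log 3 := Real.log_pos (by norm_num)
  have h4 : (0:ℝ) < Real.log 4 := Real.log_pos (by norm_num)
  have hq : q ≠ 0 := by
    rintro rfl
    have : (p : ℝ) * Real.log 3 = 0 := by simpa using h
    have hp' : (0:ℝ) < p := by exact_mod_cast Nat.pos_of_ne_zero hp
    nlinarith
  have hl : Real.log ((3:ℝ) ^ p) = Real.log ((4:ℝ) ^ q) := by
    rw [Real.log_pow, Real.log_pow]; exact_mod_cast h
  have hpow : (3:ℝ) ^ p = (4:ℝ) ^ q := by
    have e1 : (0:ℝ) < 3 ^ p := by positivity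
    have e2 : (0:ℝ) < 4 ^ q := by positivity
    calc (3:ℝ) ^ p = Real.exp (Real.log ((3:ℝ)^p)) := (Real.exp_log e1).symm
      _ = Real.exp (Real.log ((4:ℝ)^q)) := by rw [hl]
      _ = (4:ℝ) ^ q := Real.exp_log e2
  have hnat : (3:ℕ) ^ p = 4 ^ q := by exact_mod_cast hpow
  have heven : Even ((4:ℕ) ^ q) := (Nat.even_pow).2 ⟨⟨2, rfl⟩, hq⟩
  rw [← hnat] at heven
  rw [Nat.even_pow] at heven
  exact (by decide : ¬ Even 3) heven.1

lemma gen_toNat_cast (n : ℤ) (h : 0 ≤ n) : ((n.toNat : ℕ) : ℝ) = (n : ℝ) := by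
  exact_mod_cast Int.toNat_of_nonneg h

/-- Closure of a subsemigroup-like set under natural multiples. -/
lemma gen_nsmul_mem {S : Set ℝ} (h0 : (0:ℝ) ∈ S)
    (hadd : ∀ x ∈ S, ∀ y ∈ S, x + y ∈ S) (s : ℝ) (hs : s ∈ S) :
    ∀ k : ℕ, (k : ℝ) * s ∈ S := by
  intro k
  induction k with
  | zero => simpa using h0
  | succ n ih =>
    have := hadd _ ih _ hs
    convert this using 1
    push_cast; ring

/-- Density from an additively closed set with small elements and unbounded elements. -/
lemma gen_dense_aux (S : Set ℝ) (h0 : (0:ℝ) ∈ S)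
    (hadd : ∀ x ∈ S, ∀ y ∈ S, x + y ∈ S)
    (hlow : ∀ c : ℝ, ∃ y ∈ S, y ≤ c)
    (hhigh : ∀ c : ℝ, ∃ y ∈ S, c ≤ y)
    (hsmall : ∀ ε : ℝ, 0 < ε → ∃ s ∈ S, s ≠ 0 ∧ |s| < ε) :
    Dense S := by
  intro x
  rw [Metric.mem_closure_iff]
  intro ε hε
  obtain ⟨s, hsS, hs0, hsε⟩ := hsmall ε hε
  rcases hs0.lt_or_gt with hneg | hpos
  · -- s < 0 : step down from a high base
    obtain ⟨base, hbS, hbge⟩ := hhigh x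
    set t : ℝ := base - x with ht
    have ht0 : 0 ≤ t := by simp [ht]; linarith
    have hs' : 0 < -s := by linarith
    set k : ℕ := ⌈t / (-s)⌉₊ with hk
    have h1 : t / (-s) ≤ (k : ℝ) := Nat.le_ceil _
    have h2 : (k : ℝ) < t / (-s) + 1 := Nat.ceil_lt_add_one (by positivity)
    have hk1 : t ≤ (k : ℝ) * (-s) := by
      rw [div_le_iff₀ hs'] at h1; linarith
    have hk2 : (k : ℝ) * (-s) < t + (-s) := by
      have h2' : ((k : ℝ) - 1) * (-s) < t := by
        have hlt : (k : ℝ) - 1 < t / (-s) := by linarith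
        calc ((k:ℝ)-1) * (-s) < (t / (-s)) * (-s) := by nlinarith
          _ = t := div_mul_cancel₀ _ (ne_of_gt hs')
      linarith
    refine ⟨base + (k : ℝ) * s, hadd _ hbS _ (gen_nsmul_mem h0 hadd s hsS k), ?_⟩
    have hsabs : -s < ε := by rw [abs_of_neg hneg] at hsε; linarith
    rw [Real.dist_eq, abs_lt]
    constructor <;> nlinarith
  · -- 0 < s : step up from a low base
    obtain ⟨base, hbS, hble⟩ := hlow x
    set t : ℝ := x - base with ht
    have ht0 : 0 ≤ t := by simp [ht]; linarith
    set k : ℕ := ⌈t / s⌉₊ with hk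
    have h1 : t / s ≤ (k : ℝ) := Nat.le_ceil _
    have h2 : (k : ℝ) < t / s + 1 := Nat.ceil_lt_add_one (by positivity)
    have hk1 : t ≤ (k : ℝ) * s := by rw [div_le_iff₀ hpos] at h1; linarith
    have hk2 : (k : ℝ) * s < t + s := by
      have h2' : ((k : ℝ) - 1) * s < t := by
        have hlt : (k : ℝ) - 1 < t / s := by linarith
        calc ((k:ℝ)-1) * s < (t / s) * s := by nlinarith
          _ = t := div_mul_cancel₀ _ (ne_of_gt hpos)
      linarith
    refine ⟨base + (k : ℝ) * s, hadd _ hbS _ (gen_nsmul_mem h0 hadd s hsS k), ?_⟩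
    have hsabs : s < ε := by rw [abs_of_pos hpos] at hsε; exact hsε
    rw [Real.dist_eq, abs_lt]
    constructor <;> nlinarith

/-- The set of `n log 3 - m log 4` is dense. -/
lemma gen_dense_log : Dense {x : ℝ | ∃ m n : ℕ, x = n * Real.log 3 - m * Real.log 4} := by
  set a : ℝ := Real.log 3 with ha
  set b : ℝ := Real.log 4 with hb
  have h3 : (0:ℝ) < a := Real.log_pos (by norm_num)
  have h4 : (0:ℝ) < b := Real.log_pos (by norm_num)
  set S : Set ℝ := {x : ℝ | ∃ m n : ℕ, x = n * a - m * b} with hS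
  have h0 : (0:ℝ) ∈ S := ⟨0, 0, by simp⟩
  have hadd : ∀ x ∈ S, ∀ y ∈ S, x + y ∈ S := by
    rintro x ⟨m1, n1, rfl⟩ y ⟨m2, n2, rfl⟩
    exact ⟨m1 + m2, n1 + n2, by push_cast; ring⟩
  have hlow : ∀ c : ℝ, ∃ y ∈ S, y ≤ c := by
    intro c
    obtain ⟨m, hm⟩ := exists_nat_gt ((-c) / b)
    refine ⟨-(m * b), ⟨m, 0, by push_cast; ring⟩, ?_⟩
    rw [div_lt_iff₀ h4] at hm; linarith
  have hhigh : ∀ c : ℝ, ∃ y ∈ S, c ≤ y := by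
    intro c
    obtain ⟨n, hn⟩ := exists_nat_gt (c / a)
    refine ⟨n * a, ⟨0, n, by push_cast; ring⟩, ?_⟩
    rw [div_lt_iff₀ h3] at hn; linarith
  refine gen_dense_aux S h0 hadd hlow hhigh ?_
  intro ε hε
  -- the subgroup generated by a and b is dense
  have hdense : Dense ((AddSubgroup.closure ({a, b} : Set ℝ) : AddSubgroup ℝ) : Set ℝ) := by
    rcases (AddSubgroup.closure ({a, b} : Set ℝ)).dense_or_cyclic with hd | ⟨g, hg⟩
    · exact hd
    · exfalso
      have haH : a ∈ AddSubgroup.closure ({a, b} : Set ℝ) :=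
        AddSubgroup.subset_closure (Set.mem_insert _ _)
      have hbH : b ∈ AddSubgroup.closure ({a, b} : Set ℝ) :=
        AddSubgroup.subset_closure (Set.mem_insert_of_mem _ rfl)
      rw [hg, AddSubgroup.mem_closure_singleton] at haH hbH
      obtain ⟨k, hk⟩ := haH
      obtain ⟨l, hl⟩ := hbH
      have hk' : (k : ℝ) * g = a := by rw [← hk]; simp [zsmul_eq_mul]
      have hl' : (l : ℝ) * g = b := by rw [← hl]; simp [zsmul_eq_mul]
      have hrel : (l : ℝ) * a = (k : ℝ) * b := by
        rw [← hk', ← hl']; ring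
      rcases lt_trichotomy l 0 with hlneg | hl0 | hlpos
      · -- l < 0 ⟹ k < 0, use -l, -k
        have hkneg : (k : ℝ) < 0 := by
          by_contra hkk
          push_neg at hkk
          have : (l : ℝ) < 0 := by exact_mod_cast hlneg
          nlinarith
        have hk0 : k < 0 := by exact_mod_cast hkneg
        have := gen_key (-l).toNat (-k).toNat (by omega) ?_
        · exact this
        · rw [gen_toNat_cast _ (by omega), gen_toNat_cast _ (by omega), ← ha, ← hb]
          push_cast
          nlinarith [hrel]
      · -- l = 0 ⟹ k = 0 ⟹ a = 0, contradiction
        subst hl0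
        have : (k : ℝ) * b = 0 := by rw [← hrel]; simp
        have hk0 : (k : ℝ) = 0 := by
          rcases mul_eq_zero.1 this with h | h
          · exact h
          · linarith
        rw [hk0, zero_mul] at hk'
        linarith [hk'.symm ▸ h3]
      · -- l > 0
        have hkpos : (0:ℝ) < (k : ℝ) := by
          have : (0:ℝ) < (l : ℝ) := by exact_mod_cast hlpos
          nlinarith
        have hk0 : 0 < k := by exact_mod_cast hkpos
        have := gen_key l.toNat k.toNat (by omega) ?_
        · exact this
        · rw [gen_toNat_cast _ (by omega), gen_toNat_cast _ (by omega), ← ha, ← hb]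
          linarith [hrel]
  -- extract a small element of the subgroup
  set ε' : ℝ := min ε (min a b) with hε'
  have hε'0 : 0 < ε' := lt_min hε (lt_min h3 h4)
  obtain ⟨h, hhH, hhIoo⟩ := hdense.exists_mem_open isOpen_Ioo
    (⟨ε'/2, by constructor <;> [linarith; linarith]⟩ : (Set.Ioo (0:ℝ) ε').Nonempty)
  obtain ⟨hpos, hlt⟩ := hhIoo
  rw [SetLike.mem_coe, AddSubgroup.mem_closure_pair] at hhH
  obtain ⟨p, q, hpq⟩ := hhH
  have hpq' : (p : ℝ) * a + (q : ℝ) * b = h := by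
    rw [← hpq]; simp [zsmul_eq_mul]
  have hεa : ε' ≤ a := le_trans (min_le_right _ _) (min_le_left _ _)
  have hεb : ε' ≤ b := le_trans (min_le_right _ _) (min_le_right _ _)
  have hεε : ε' ≤ ε := min_le_left _ _
  rcases le_or_gt 0 p with hp | hp <;> rcases le_or_gt q 0 with hq | hq
  · -- p ≥ 0, q ≤ 0 : h itself is in S
    refine ⟨h, ⟨(-q).toNat, p.toNat, ?_⟩, by linarith, ?_⟩
    · rw [gen_toNat_cast (-q) (by omega), gen_toNat_cast p hp]
      push_cast; linarith [hpq']
    · rw [abs_of_pos hpos]; linarith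
  · -- p ≥ 0, q > 0 : contradiction, h ≥ b
    exfalso
    have hq1 : (1:ℝ) ≤ (q : ℝ) := by exact_mod_cast hq
    have hp0 : (0:ℝ) ≤ (p : ℝ) := by exact_mod_cast hp
    nlinarith
  · -- p < 0, q ≤ 0 : contradiction, h ≤ -a
    exfalso
    have hp1 : (p : ℝ) ≤ -1 := by exact_mod_cast Int.le_sub_one_of_lt hp
    have hq0 : (q : ℝ) ≤ 0 := by exact_mod_cast hq
    nlinarith
  · -- p < 0, q > 0 : -h is in S
    refine ⟨-h, ⟨q.toNat, (-p).toNat, ?_⟩, by linarith, ?_⟩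
    · rw [gen_toNat_cast q (by omega), gen_toNat_cast (-p) (by omega)]
      push_cast; linarith [hpq']
    · rw [abs_of_neg (by linarith)]; linarith

/-- The pair `(-1/2, 3)` is a generating pair in `ℝ`: `|-1/2| < |3|` and
`{(-1/2)^m · 3^n : m, n ∈ ℕ}` is dense in `ℝ`. -/
theorem stmt_9 :
    |(-1/2 : ℝ)| < |(3 : ℝ)| ∧
      Dense {x : ℝ | ∃ m n : ℕ, x = (-1/2 : ℝ) ^ m * (3 : ℝ) ^ n} := by
  constructor
  · rw [abs_of_nonpos (by norm_num), abs_of_nonneg (by norm_num)]; norm_num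
  set T : Set ℝ := {x : ℝ | ∃ m n : ℕ, x = (-1/2 : ℝ) ^ m * (3 : ℝ) ^ n} with hT
  set S : Set ℝ := {x : ℝ | ∃ m n : ℕ, x = n * Real.log 3 - m * Real.log 4} with hSdef
  have hS : Dense S := gen_dense_log
  -- exp of S lands in T (even powers of -1/2)
  have hexpS : ∀ x ∈ S, Real.exp x ∈ T := by
    rintro x ⟨m, n, rfl⟩
    refine ⟨2 * m, n, ?_⟩
    rw [Real.exp_sub, Real.exp_nat_mul, Real.exp_nat_mul,
      Real.exp_log (by norm_num : (0:ℝ) < 3), Real.exp_log (by norm_num : (0:ℝ) < 4)]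
    rw [pow_mul, show ((-1/2:ℝ))^2 = 4⁻¹ by norm_num, inv_pow, div_eq_mul_inv, mul_comm]
  have hposclos : ∀ y : ℝ, 0 < y → y ∈ closure T := by
    intro y hy
    have h1 : Real.log y ∈ closure S := hS _
    have h2 : Real.exp (Real.log y) ∈ closure (Real.exp '' S) :=
      mem_closure_image (Real.continuous_exp.continuousAt) h1
    rw [Real.exp_log hy] at h2
    refine closure_mono ?_ h2
    rintro z ⟨x, hx, rfl⟩
    exact hexpS x hx
  intro x
  rcases lt_trichotomy x 0 with hx | hx | hx
  · -- negative: x = (-1/2) * y with y = -2x > 0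
    have hy : (0:ℝ) < -2 * x := by linarith
    have h1 : (-2 * x) ∈ closure T := hposclos _ hy
    have h2 : (-1/2 : ℝ) * (-2 * x) ∈ closure ((fun t => (-1/2 : ℝ) * t) '' T) :=
      mem_closure_image (by fun_prop) h1
    have h3 : (-1/2 : ℝ) * (-2 * x) = x := by ring
    rw [h3] at h2
    refine closure_mono ?_ h2
    rintro z ⟨t, ⟨m, n, rfl⟩, rfl⟩
    exact ⟨m + 1, n, by ring⟩
  · -- zero: limit of (-1/2)^(2m) = (1/4)^m
    subst hx
    have htend : Filter.Tendsto (fun m : ℕ => ((1:ℝ)/4) ^ m) Filter.atTop (nhds 0) :=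
      tendsto_pow_atTop_nhds_zero_of_lt_one (by norm_num) (by norm_num)
    refine mem_closure_of_tendsto htend (Filter.Eventually.of_forall fun m => ?_)
    refine ⟨2 * m, 0, ?_⟩
    rw [pow_mul]
    norm_num [inv_pow]
  · exact hposclos x hx
end

section
/- Let 𝕂 = ℝ or ℂ, let k > n ≥ 1, let A and B be n×n matrices over 𝕂, and let C be an n×k matrix over 𝕂. Then the orbit of C under the action of the semigroup generated by A and B, namely the set consisting of C together with all matrices WC where W is a finite product of copies of A and B, is not dense in the space of n×k matrices over 𝕂. -/
open Matrix

/-- **No dense orbit on `n × k` matrices when `k > n`.** Let `𝕂 = ℝ` or `ℂ`,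
`k > n ≥ 1`, `A, B` be `n × n` matrices and `C` an `n × k` matrix over `𝕂`. Then the
orbit of `C` under the semigroup generated by `A` and `B` (i.e. `C` together with all
`WC` for `W` a finite product of copies of `A` and `B`) is not dense in the space of
`n × k` matrices. -/
theorem stmt_13 {𝕂 : Type*} [RCLike 𝕂] {n k : ℕ} (hn : 1 ≤ n) (hk : n < k)
    (A B : Matrix (Fin n) (Fin n) 𝕂) (C : Matrix (Fin n) (Fin k) 𝕂) :
    ¬ Dense ({C} ∪ {Y : Matrix (Fin n) (Fin k) 𝕂 |
        ∃ W ∈ Subsemigroup.closure ({A, B} : Set (Matrix (Fin n) (Fin n) 𝕂)),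
          Y = W * C}) := by
  -- find a nonzero vector in the right kernel of C
  have hninj : ¬ Function.Injective C.mulVecLin := by
    intro hinj
    have h1 := LinearMap.finrank_le_finrank_of_injective hinj
    simp only [Module.finrank_pi, Fintype.card_fin] at h1
    omega
  rw [Function.not_injective_iff] at hninj
  obtain ⟨x, y, hxy, hne⟩ := hninj
  set v : Fin k → 𝕂 := x - y with hv
  have hv0 : v ≠ 0 := sub_ne_zero_of_ne hne
  have hCv : C.mulVec v = 0 := by
    have : C.mulVecLin (x - y) = 0 := by
      rw [map_sub, hxy, sub_self]
    simpa using this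
  -- the linear map Y ↦ Y.mulVec v
  let f : Matrix (Fin n) (Fin k) 𝕂 →ₗ[𝕂] (Fin n → 𝕂) :=
    { toFun := fun Y => Y.mulVec v
      map_add' := fun X Y => Matrix.add_mulVec X Y v
      map_smul' := fun c Y => by simp [Matrix.smul_mulVec] }
  have hfc : Continuous f := f.continuous_of_finiteDimensional
  intro hdense
  have hsub : ({C} ∪ {Y : Matrix (Fin n) (Fin k) 𝕂 |
      ∃ W ∈ Subsemigroup.closure ({A, B} : Set (Matrix (Fin n) (Fin n) 𝕂)),
        Y = W * C}) ⊆ f ⁻¹' {0} := by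
    rintro Y (rfl | ⟨W, _, rfl⟩)
    · simpa [f] using hCv
    · show (W * C).mulVec v = 0
      rw [← Matrix.mulVec_mulVec, hCv, Matrix.mulVec_zero]
  have hclosed : IsClosed (f ⁻¹' {0}) := (isClosed_singleton).preimage hfc
  have hall : ∀ Y : Matrix (Fin n) (Fin k) 𝕂, Y.mulVec v = 0 := by
    intro Y
    have : (Set.univ : Set (Matrix (Fin n) (Fin k) 𝕂)) ⊆ f ⁻¹' {0} := by
      rw [← hdense.closure_eq]
      exact hclosed.closure_subset_iff.mpr hsub
    exact this (Set.mem_univ Y)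
  -- contradiction: some matrix has nonzero mulVec v
  obtain ⟨i, hi⟩ : ∃ i, v i ≠ 0 := Function.ne_iff.mp hv0
  have := hall (Matrix.single ⟨0, hn⟩ i 1)
  have hval := congrFun this ⟨0, hn⟩
  rw [Matrix.mulVec, dotProduct] at hval
  simp [Matrix.single, Finset.sum_ite_eq'] at hval
  exact hi hval
end

section
/- Let 𝕂 = ℝ or ℂ and let A be an n×n lower triangular matrix over 𝕂 such that all of the entries of A on the main diagonal and on the first column are non-zero, all other entries of A are zero, and the diagonal entries satisfy 0 < |A_1| < |A_2| < … < |A_n|. Then the matrix A_1⁻¹A − I + Δ is invertible and every entry on the first column of (A_1⁻¹A − I + Δ)⁻¹ is non-zero. -/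
/-!
Write `a = A_1` and `B = a⁻¹A − I + Δ`. Off the diagonal, `B` vanishes outside its first column,
and its first row is that of `I`. Its diagonal entries are `B_1 = 1` and `B_i = A_i / a − 1`,
which are non-zero because `|A_i| ≠ |a|`; its first-column entries `A_{i1} / a` are non-zero.
A matrix with this pattern and non-zero diagonal has trivial kernel, and forward substitution
in `B x = e_1` gives `x_1 = 1 / B_1` and `x_i = −B_{i1} x_1 / B_i`, all non-zero.
-/

open Matrix

namespace Matrix

section DiagonalPlusColumn

variable {R K ι : Type*} [Fintype ι] {k : ι}

section Semiring

variable [NonUnitalNonAssocSemiring R] {M : Matrix ι ι R}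

theorem mulVec_apply_of_diagonal_plus_column (hM : ∀ i j, j ≠ i → j ≠ k → M i j = 0)
    (v : ι → R) {i : ι} (hi : i ≠ k) : (M *ᵥ v) i = M i i * v i + M i k * v k := by
  refine Fintype.sum_eq_add i k hi fun j hj => ?_
  change M i j * v j = 0
  rw [hM i j hj.1 hj.2, zero_mul]

theorem mulVec_apply_self_of_diagonal_plus_column (hM : ∀ i j, j ≠ i → j ≠ k → M i j = 0)
    (v : ι → R) : (M *ᵥ v) k = M k k * v k :=
  Fintype.sum_eq_single k fun j hj => by
    change M k j * v j = 0
    rw [hM k j hj hj, zero_mul]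

end Semiring

variable [DecidableEq ι]

theorem mulVec_inv_col [CommRing R] {M : Matrix ι ι R} (hM : IsUnit M) (k : ι) :
    M *ᵥ M⁻¹.col k = Pi.single k 1 := by
  rw [← mulVec_single_one, mulVec_mulVec, mul_nonsing_inv M ((isUnit_iff_isUnit_det M).1 hM),
    one_mulVec]

variable [Field K] {M : Matrix ι ι K}

theorem isUnit_of_diagonal_plus_column (hM : ∀ i j, j ≠ i → j ≠ k → M i j = 0)
    (hdiag : ∀ i, M i i ≠ 0) : IsUnit M := by
  refine M.isUnit_iff_isUnit_det.2 (isUnit_iff_ne_zero.2 fun hdet => ?_)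
  obtain ⟨v, hv, hMv⟩ := exists_mulVec_eq_zero_iff.2 hdet
  have hvk : v k = 0 := by
    simpa [hdiag k] using (mulVec_apply_self_of_diagonal_plus_column hM v).symm.trans
      (congrFun hMv k)
  refine hv (funext fun i => ?_)
  by_cases hi : i = k
  · rw [hi, hvk, Pi.zero_apply]
  · simpa [hvk, hdiag i] using (mulVec_apply_of_diagonal_plus_column hM v hi).symm.trans
      (congrFun hMv i)

theorem inv_apply_self_of_diagonal_plus_column (hM : ∀ i j, j ≠ i → j ≠ k → M i j = 0)
    (hdiag : ∀ i, M i i ≠ 0) : M⁻¹ k k = (M k k)⁻¹ := by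
  have h := congrFun (mulVec_inv_col (isUnit_of_diagonal_plus_column hM hdiag) k) k
  rw [mulVec_apply_self_of_diagonal_plus_column hM, Pi.single_eq_same, col_apply] at h
  exact eq_inv_of_mul_eq_one_right h

theorem inv_apply_of_diagonal_plus_column (hM : ∀ i j, j ≠ i → j ≠ k → M i j = 0)
    (hdiag : ∀ i, M i i ≠ 0) {i : ι} (hi : i ≠ k) :
    M⁻¹ i k = -M i k / (M i i * M k k) := by
  have h := congrFun (mulVec_inv_col (isUnit_of_diagonal_plus_column hM hdiag) k) i
  rw [mulVec_apply_of_diagonal_plus_column hM _ hi, Pi.single_eq_of_ne hi, col_apply, col_apply,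
    inv_apply_self_of_diagonal_plus_column hM hdiag] at h
  have := hdiag i
  have := hdiag k
  field_simp at h ⊢
  linear_combination h

theorem inv_apply_ne_zero_of_diagonal_plus_column (hM : ∀ i j, j ≠ i → j ≠ k → M i j = 0)
    (hdiag : ∀ i, M i i ≠ 0) (hcol : ∀ i, M i k ≠ 0) (i : ι) : M⁻¹ i k ≠ 0 := by
  by_cases hi : i = k
  · rw [hi, inv_apply_self_of_diagonal_plus_column hM hdiag]
    exact inv_ne_zero (hdiag k)
  · rw [inv_apply_of_diagonal_plus_column hM hdiag hi]
    exact div_ne_zero (neg_ne_zero.2 (hcol i)) (mul_ne_zero (hdiag i) (hdiag k))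

end DiagonalPlusColumn

end Matrix

theorem stmt_14_general {𝕂 : Type*} [RCLike 𝕂] {n : ℕ} (hn : 0 < n)
    (A : Matrix (Fin n) (Fin n) 𝕂)
    (hfirst : ∀ i : Fin n, A i ⟨0, hn⟩ ≠ 0)
    (hzero : ∀ i j : Fin n, j ≠ i → j ≠ ⟨0, hn⟩ → A i j = 0)
    (hmono : StrictMono fun i : Fin n => ‖A i i‖) :
    IsUnit ((A ⟨0, hn⟩ ⟨0, hn⟩)⁻¹ • A - 1 +
        Matrix.single (⟨0, hn⟩ : Fin n) (⟨0, hn⟩ : Fin n) (1 : 𝕂)) ∧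
      ∀ i : Fin n,
        (((A ⟨0, hn⟩ ⟨0, hn⟩)⁻¹ • A - 1 +
          Matrix.single (⟨0, hn⟩ : Fin n) (⟨0, hn⟩ : Fin n) (1 : 𝕂))⁻¹) i ⟨0, hn⟩ ≠ 0 := by
  set z : Fin n := ⟨0, hn⟩
  set B := (A z z)⁻¹ • A - 1 + Matrix.single z z (1 : 𝕂)
  have ha : A z z ≠ 0 := hfirst z
  have hB : ∀ i j, j ≠ i → j ≠ z → B i j = 0 := fun i j hji hjz => by
    simp [B, hzero i j hji hjz, one_apply_ne' hji, single_apply_of_col_ne _ _ hjz.symm]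
  have hBdiag : ∀ i, B i i ≠ 0 := by
    intro i
    by_cases hi : i = z
    · simp [B, hi, ha]
    · have hAi : A i i ≠ A z z := fun h => hi (hmono.injective (congrArg norm h))
      simpa [B, single_apply_of_row_ne (Ne.symm hi), sub_eq_zero, inv_mul_eq_one₀ ha]
        using hAi.symm
  have hBcol : ∀ i, B i z ≠ 0 := by
    intro i
    by_cases hi : i = z
    · simpa [hi] using hBdiag z
    · simp [B, hi, single_apply_of_row_ne (Ne.symm hi), ha, hfirst i]
  exact ⟨isUnit_of_diagonal_plus_column hB hBdiag,
    inv_apply_ne_zero_of_diagonal_plus_column hB hBdiag hBcol⟩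

/-- **Genericity of condition (ii).** Let `𝕂 = ℝ` or `ℂ` and let `A` be an `n × n`
lower triangular matrix over `𝕂` whose diagonal entries and first-column entries are
all non-zero, all other entries are zero, and whose diagonal entries satisfy
`0 < |A_1| < |A_2| < … < |A_n|`. Then `A_1⁻¹A − I + Δ` is invertible and every entry
on the first column of `(A_1⁻¹A − I + Δ)⁻¹` is non-zero, where `Δ` has a `1` in
position `(1,1)` and zeros elsewhere. -/
theorem stmt_14 {𝕂 : Type*} [RCLike 𝕂] {n : ℕ} (hn : 0 < n)
    (A : Matrix (Fin n) (Fin n) 𝕂)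
    (hdiag : ∀ i : Fin n, A i i ≠ 0)
    (hfirst : ∀ i : Fin n, A i ⟨0, hn⟩ ≠ 0)
    (hzero : ∀ i j : Fin n, j ≠ i → j ≠ ⟨0, hn⟩ → A i j = 0)
    (hpos : 0 < ‖A ⟨0, hn⟩ ⟨0, hn⟩‖)
    (hmono : StrictMono fun i : Fin n => ‖A i i‖) :
    IsUnit ((A ⟨0, hn⟩ ⟨0, hn⟩)⁻¹ • A - 1 +
        Matrix.single (⟨0, hn⟩ : Fin n) (⟨0, hn⟩ : Fin n) (1 : 𝕂)) ∧
      ∀ i : Fin n,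
        (((A ⟨0, hn⟩ ⟨0, hn⟩)⁻¹ • A - 1 +
          Matrix.single (⟨0, hn⟩ : Fin n) (⟨0, hn⟩ : Fin n) (1 : 𝕂))⁻¹) i ⟨0, hn⟩ ≠ 0 :=
  stmt_14_general hn A hfirst hzero hmono
end
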